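/- arXiv:1707.05674 — 4 statements merged into one kernel-verified Lean document; each statement's English description precedes it below -/
import Mathlib

section
/- Let M, T, N be positive integers, let y_1, …, y_T ∈ ℂ^M, let σ > 0, and for i = 1, …, N let C_i ∈ ℂ^{M×M} be Hermitian positive semidefinite, let W_i = C_i (C_i + σ² I)⁻¹, and let p_i > 0. Define the scaled sample covariance matrix Ĉ = (1/σ²) Σ_{t=1}^T y_t y_tᴴ, the likelihood weights L_i = exp(−Σ_{t=1}^T Re(y_tᴴ (C_i + σ² I)⁻¹ y_t)) / (Re det(C_i + σ² I))^T, and the weights μ_i = exp(Re tr(W_i Ĉ) + T · log(Re det(I − W_i))). Then (Σ_{i=1}^N p_i μ_i) · (Σ_{i=1}^N p_i L_i W_i) = (Σ_{i=1}^N p_i L_i) · (Σ_{i=1}^N p_i μ_i W_i); that is, the likelihood-weighted convex combination of the filters W_i equals the convex combination with weights exp(Re tr(W_i Ĉ) + T·log(Re det(I − W_i))), so the MMSE filter depends on the observations only through the scaled sample covariance matrix Ĉ. -/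
open Matrix BigOperators ComplexOrder

lemma trace_mul_vecMulVec' {n : Type*} [Fintype n] (A : Matrix n n ℂ) (u v : n → ℂ) :
    (A * vecMulVec u v).trace = v ⬝ᵥ (A *ᵥ u) := by
  simp only [Matrix.trace, Matrix.diag, Matrix.mul_apply, vecMulVec_apply, dotProduct, mulVec,
    Finset.mul_sum]
  exact Finset.sum_congr rfl fun i _ => Finset.sum_congr rfl fun j _ => by ring

lemma smul_one_posDef (M : ℕ) (σ : ℝ) (hσ : 0 < σ) :
    (((σ ^ 2 : ℝ) : ℂ) • (1 : Matrix (Fin M) (Fin M) ℂ)).PosDef := by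
  refine Matrix.posDef_iff_dotProduct_mulVec.mpr ⟨?_, fun x hx => ?_⟩
  · simp [Matrix.IsHermitian, conjTranspose_smul, Complex.star_def, Complex.conj_ofReal]
  · have h2 : (0:ℂ) < ((σ^2:ℝ):ℂ) := by rw [Complex.zero_lt_real]; positivity
    simp only [smul_mulVec, one_mulVec, dotProduct_smul, smul_eq_mul]
    exact mul_pos h2 (Matrix.dotProduct_star_self_pos_iff.mpr hx)

lemma key_ratio (M T : ℕ) (y : Fin T → Fin M → ℂ) (σ : ℝ) (hσ : 0 < σ)
    (C : Matrix (Fin M) (Fin M) ℂ) (hC : C.PosSemidef) :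
    Real.exp (-(∑ t : Fin T,
        (star (y t) ⬝ᵥ ((C + ((σ ^ 2 : ℝ) : ℂ) • (1 : Matrix (Fin M) (Fin M) ℂ))⁻¹ *ᵥ y t)).re)) /
      ((C + ((σ ^ 2 : ℝ) : ℂ) • (1 : Matrix (Fin M) (Fin M) ℂ)).det.re) ^ T =
    (Real.exp (-((σ ^ 2)⁻¹ * ∑ t : Fin T, (star (y t) ⬝ᵥ y t).re)) / ((σ ^ 2) ^ M) ^ T) *
    Real.exp ((((C * (C + ((σ ^ 2 : ℝ) : ℂ) • (1 : Matrix (Fin M) (Fin M) ℂ))⁻¹) *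
        ((1 / σ ^ 2 : ℝ) • ∑ t : Fin T, vecMulVec (y t) (star (y t)))).trace).re
      + (T : ℝ) * Real.log
          ((1 - C * (C + ((σ ^ 2 : ℝ) : ℂ) • (1 : Matrix (Fin M) (Fin M) ℂ))⁻¹).det.re)) := by
  have hσ2 : (0:ℝ) < σ ^ 2 := by positivity
  set A : Matrix (Fin M) (Fin M) ℂ := C + ((σ ^ 2 : ℝ) : ℂ) • 1 with hA
  set Wm : Matrix (Fin M) (Fin M) ℂ := C * A⁻¹ with hWm
  have hApd : A.PosDef := Matrix.PosDef.posSemidef_add hC (smul_one_posDef M σ hσ)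
  have hdetpos : (0:ℂ) < A.det := hApd.det_pos
  have hdre : 0 < A.det.re := by
    rw [Complex.lt_def] at hdetpos; simpa using hdetpos.1
  have hdeq : A.det = ((A.det.re : ℝ) : ℂ) := by
    rw [Complex.lt_def] at hdetpos
    exact Complex.ext rfl (by simpa using hdetpos.2.symm)
  have h1 : A * A⁻¹ = 1 := mul_nonsing_inv _ hApd.det_pos.ne'.isUnit
  have hIW : 1 - Wm = ((σ ^ 2 : ℝ) : ℂ) • A⁻¹ := by
    calc 1 - Wm = A * A⁻¹ - C * A⁻¹ := by rw [h1, hWm]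
    _ = (A - C) * A⁻¹ := (sub_mul _ _ _).symm
    _ = (((σ ^ 2 : ℝ) : ℂ) • 1) * A⁻¹ := by rw [hA, add_sub_cancel_left]
    _ = ((σ ^ 2 : ℝ) : ℂ) • A⁻¹ := by rw [Matrix.smul_mul, one_mul]
  have hc0 : ((σ ^ 2 : ℝ) : ℂ) ≠ 0 := Complex.ofReal_ne_zero.mpr hσ2.ne'
  have hAinv : A⁻¹ = (((σ ^ 2 : ℝ) : ℂ))⁻¹ • (1 - Wm) := by
    rw [hIW, smul_smul, inv_mul_cancel₀ hc0, one_smul]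
  have hdet1W : (1 - Wm).det = (((σ ^ 2) ^ M / A.det.re : ℝ) : ℂ) := by
    rw [hIW, det_smul, Fintype.card_fin, det_nonsing_inv, Ring.inverse_eq_inv', hdeq]
    push_cast
    norm_num [div_eq_mul_inv]
  have hdet1Wre : (1 - Wm).det.re = (σ ^ 2) ^ M / A.det.re := by
    rw [hdet1W, Complex.ofReal_re]
  have he : 0 < (σ ^ 2) ^ M / A.det.re := by positivity
  -- trace
  have htr : (((Wm) *
        ((1 / σ ^ 2 : ℝ) • ∑ t : Fin T, vecMulVec (y t) (star (y t)))).trace).re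
      = (σ ^ 2)⁻¹ * ∑ t : Fin T, (star (y t) ⬝ᵥ (Wm *ᵥ y t)).re := by
    rw [Matrix.mul_smul, trace_smul, Complex.smul_re, Matrix.mul_sum, trace_sum]
    rw [one_div]
    congr 1
    rw [Complex.re_sum]
    exact Finset.sum_congr rfl fun t _ => by rw [trace_mul_vecMulVec']
  have hqu : ∀ t, (star (y t) ⬝ᵥ (A⁻¹ *ᵥ y t)).re
      = (σ ^ 2)⁻¹ * ((star (y t) ⬝ᵥ y t).re - (star (y t) ⬝ᵥ (Wm *ᵥ y t)).re) := by
    intro t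
    rw [hAinv, ← Complex.ofReal_inv, smul_mulVec, dotProduct_smul, smul_eq_mul,
      Complex.re_ofReal_mul, sub_mulVec, one_mulVec, dotProduct_sub, Complex.sub_re]
  rw [htr]
  have hsum : (∑ t : Fin T, (star (y t) ⬝ᵥ (A⁻¹ *ᵥ y t)).re)
      = (σ ^ 2)⁻¹ * ∑ t : Fin T, (star (y t) ⬝ᵥ y t).re
        - (σ ^ 2)⁻¹ * ∑ t : Fin T, (star (y t) ⬝ᵥ (Wm *ᵥ y t)).re := by
    rw [← mul_sub, ← Finset.sum_sub_distrib, Finset.mul_sum]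
    exact Finset.sum_congr rfl fun t _ => hqu t
  rw [hsum, hdet1Wre]
  rw [Real.exp_add, Real.exp_nat_mul, Real.exp_log he, neg_sub, Real.exp_sub, Real.exp_neg, div_pow]
  have h1' : Real.exp ((σ ^ 2)⁻¹ * ∑ t : Fin T, (star (y t) ⬝ᵥ y t).re) ≠ 0 := Real.exp_ne_zero _
  have h2' : A.det.re ^ T ≠ 0 := pow_ne_zero _ hdre.ne'
  have h3' : ((σ ^ 2) ^ M) ^ T ≠ 0 := by positivity
  field_simp

theorem mmse_filter_depends_only_on_sample_covariance
    (M T N : ℕ) (hM : 0 < M) (hT : 0 < T) (hN : 0 < N)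
    (y : Fin T → (Fin M → ℂ)) (σ : ℝ) (hσ : 0 < σ)
    (C : Fin N → Matrix (Fin M) (Fin M) ℂ)
    (hC : ∀ i, (C i).PosSemidef)
    (W : Fin N → Matrix (Fin M) (Fin M) ℂ)
    (hW : ∀ i, W i = C i * (C i + ((σ ^ 2 : ℝ) : ℂ) • (1 : Matrix (Fin M) (Fin M) ℂ))⁻¹)
    (p : Fin N → ℝ) (hp : ∀ i, 0 < p i)
    (Chat : Matrix (Fin M) (Fin M) ℂ)
    (hChat : Chat = (1 / σ ^ 2 : ℝ) •
      ∑ t : Fin T, vecMulVec (y t) (star (y t)))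
    (L : Fin N → ℝ)
    (hL : ∀ i, L i =
      Real.exp (-(∑ t : Fin T,
        (star (y t) ⬝ᵥ ((C i + ((σ ^ 2 : ℝ) : ℂ) • (1 : Matrix (Fin M) (Fin M) ℂ))⁻¹ *ᵥ y t)).re)) /
      ((C i + ((σ ^ 2 : ℝ) : ℂ) • (1 : Matrix (Fin M) (Fin M) ℂ)).det.re) ^ T)
    (μ : Fin N → ℝ)
    (hμ : ∀ i, μ i =
      Real.exp (((W i * Chat).trace).re + (T : ℝ) * Real.log ((1 - W i).det.re))) :
    (∑ i : Fin N, p i * μ i) • (∑ i : Fin N, (p i * L i) • W i) =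
      (∑ i : Fin N, p i * L i) • (∑ i : Fin N, (p i * μ i) • W i) := by
  set k : ℝ := Real.exp (-((σ ^ 2)⁻¹ * ∑ t : Fin T, (star (y t) ⬝ᵥ y t).re)) / ((σ ^ 2) ^ M) ^ T
    with hkdef
  have hk : ∀ i, L i = k * μ i := by
    intro i
    rw [hL i, hμ i, hW i, hChat, hkdef]
    exact key_ratio M T y σ hσ (C i) (hC i)
  have hpl : ∀ i, p i * L i = k * (p i * μ i) := fun i => by rw [hk i]; ring
  simp_rw [hpl, mul_smul, ← Finset.smul_sum, ← Finset.mul_sum]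
  rw [smul_smul, mul_comm]
end

section
/- Let M, K, N, T be positive integers, let Q ∈ ℂ^{K×M}, let σ > 0 and y_1, …, y_T ∈ ℂ^M. For i = 1, …, N let w_i ∈ ℝ^K and b_i ∈ ℝ, and define the structured filters W_i = Qᴴ diag(w_i) Q ∈ ℂ^{M×M}. Let Ĉ = (1/σ²) Σ_{t=1}^T y_t y_tᴴ and let ĉ ∈ ℝ^K be defined by ĉ_k = (1/σ²) Σ_{t=1}^T |(Q y_t)_k|². Then Re tr(W_i Ĉ) = w_iᵀ ĉ for every i, Σ_{i=1}^N exp(Re tr(W_i Ĉ) + b_i) = Σ_{i=1}^N exp(w_iᵀ ĉ + b_i) > 0, and ( Σ_{i=1}^N exp(Re tr(W_i Ĉ) + b_i) · W_i ) / ( Σ_{i=1}^N exp(Re tr(W_i Ĉ) + b_i) ) = Qᴴ diag( ( Σ_{i=1}^N exp(w_iᵀ ĉ + b_i) · w_i ) / ( Σ_{i=1}^N exp(w_iᵀ ĉ + b_i) ) ) Q; that is, the softmax-weighted combination of the structured filters W_i equals Qᴴ diag(ŵ) Q where ŵ is the softmax-weighted combination of the vectors w_i with scores w_iᵀ ĉ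 + b_i. -/
open Matrix BigOperators

theorem aux_trace_smmse (M K : ℕ) (Q : Matrix (Fin K) (Fin M) ℂ) (d : Fin K → ℂ) (u : Fin M → ℂ) :
    ((Qᴴ * diagonal d * Q) * vecMulVec u (star u)).trace
      = ∑ k, d k * ((Q *ᵥ u) k * star ((Q *ᵥ u) k)) := by
  simp only [trace, diag, mul_apply, vecMulVec_apply, diagonal_apply, conjTranspose_apply,
    mulVec, dotProduct, Pi.star_apply, Finset.mem_univ, mul_ite, ite_mul, mul_zero, zero_mul,
    Finset.sum_ite_eq, Finset.sum_ite_eq', if_true, Finset.sum_mul, Finset.mul_sum, star_sum,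
    star_mul', RCLike.star_def]
  refine (Finset.sum_congr rfl fun m _ => Finset.sum_comm).trans ?_
  rw [Finset.sum_comm]
  refine Finset.sum_congr rfl fun k _ => Finset.sum_congr rfl fun m _ =>
    Finset.sum_congr rfl fun m' _ => ?_
  ring

theorem structured_mmse_estimator
    (M K N T : ℕ) (hM : 0 < M) (hK : 0 < K) (hN : 0 < N) (hT : 0 < T)
    (Q : Matrix (Fin K) (Fin M) ℂ)
    (σ : ℝ) (hσ : 0 < σ)
    (y : Fin T → (Fin M → ℂ))
    (w : Fin N → (Fin K → ℝ)) (b : Fin N → ℝ)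
    (W : Fin N → Matrix (Fin M) (Fin M) ℂ)
    (hW : ∀ i, W i = Qᴴ * diagonal (fun k => ((w i k : ℝ) : ℂ)) * Q)
    (Chat : Matrix (Fin M) (Fin M) ℂ)
    (hChat : Chat = (1 / σ ^ 2 : ℝ) • ∑ t : Fin T, vecMulVec (y t) (star (y t)))
    (chat : Fin K → ℝ)
    (hchat : ∀ k, chat k = (1 / σ ^ 2) * ∑ t : Fin T, ‖(Q *ᵥ y t) k‖ ^ 2) :
    (∀ i, ((W i * Chat).trace).re = ∑ k : Fin K, w i k * chat k) ∧
    ((∑ i : Fin N, Real.exp (((W i * Chat).trace).re + b i)) =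
        ∑ i : Fin N, Real.exp ((∑ k : Fin K, w i k * chat k) + b i) ∧
      0 < ∑ i : Fin N, Real.exp ((∑ k : Fin K, w i k * chat k) + b i)) ∧
    (∑ i : Fin N, Real.exp (((W i * Chat).trace).re + b i))⁻¹ •
        (∑ i : Fin N, Real.exp (((W i * Chat).trace).re + b i) • W i) =
      Qᴴ * diagonal (fun k =>
        ((((∑ i : Fin N, Real.exp ((∑ k' : Fin K, w i k' * chat k') + b i))⁻¹ *
          ∑ i : Fin N, Real.exp ((∑ k' : Fin K, w i k' * chat k') + b i) * w i k : ℝ) : ℂ))) * Q := by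
  have key : ∀ i, (W i * Chat).trace = ((∑ k : Fin K, w i k * chat k : ℝ) : ℂ) := by
    intro i
    rw [hW i, hChat]
    rw [Matrix.mul_smul, Matrix.mul_sum, trace_smul, trace_sum]
    simp only [aux_trace_smmse]
    have hz : ∀ (z : ℂ), z * star z = ((‖z‖ ^ 2 : ℝ) : ℂ) := by
      intro z
      rw [RCLike.star_def, Complex.mul_conj, Complex.normSq_eq_norm_sq]
    simp only [hz, hchat]
    push_cast
    simp only [Complex.real_smul, Finset.mul_sum]
    rw [Finset.sum_comm]
    refine Finset.sum_congr rfl fun t _ => Finset.sum_congr rfl fun k _ => ?_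
    push_cast
    ring
  have part1 : ∀ i, ((W i * Chat).trace).re = ∑ k : Fin K, w i k * chat k := by
    intro i; rw [key i, Complex.ofReal_re]
  have pos : 0 < ∑ i : Fin N, Real.exp ((∑ k : Fin K, w i k * chat k) + b i) :=
    Finset.sum_pos (fun i _ => Real.exp_pos _)
      (Finset.univ_nonempty_iff.mpr (Fin.pos_iff_nonempty.mp hN))
  refine ⟨part1, ⟨by simp only [part1], pos⟩, ?_⟩
  simp only [part1]
  simp only [hW]
  ext m m'
  simp only [Matrix.sum_apply, Matrix.smul_apply, Matrix.smul_apply, Finset.sum_apply, mul_apply, diagonal_apply, conjTranspose_apply,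
    Finset.mem_univ, mul_ite, ite_mul, mul_zero, zero_mul, Finset.sum_ite_eq,
    Finset.sum_ite_eq', if_true, Complex.real_smul, Finset.mul_sum, Finset.sum_mul]
  rw [Finset.sum_comm]
  refine Finset.sum_congr rfl fun k _ => ?_
  push_cast
  rw [Finset.mul_sum, Finset.sum_mul]
  refine Finset.sum_congr rfl fun i _ => ?_
  ring
end

section
/- Let g : ℝ → ℝ be continuous and 2π-periodic, and let k ∈ ℤ. Define f : (−π, π) → ℝ by f(u) = 2π · ( g(arcsin(u/π)) + g(π − arcsin(u/π)) ) / √(π² − u²). Then the function u ↦ f(u) · exp(−i k u) is integrable on (−π, π) and ∫_{−π}^{π} g(θ) · exp(−i k π sin θ) dθ = (1/(2π)) · ∫_{−π}^{π} f(u) · exp(−i k u) du. -/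
open Real MeasureTheory

theorem ula_spectrum_change_of_variables
    (g : ℝ → ℝ) (hg : Continuous g) (hper : Function.Periodic g (2 * π))
    (k : ℤ) (f : ℝ → ℝ)
    (hf : ∀ u ∈ Set.Ioo (-π) π,
      f u = 2 * π * (g (Real.arcsin (u / π)) + g (π - Real.arcsin (u / π))) /
        Real.sqrt (π ^ 2 - u ^ 2)) :
    IntegrableOn (fun u : ℝ => (f u : ℂ) * Complex.exp (-Complex.I * (k : ℂ) * (u : ℂ)))
      (Set.Ioo (-π) π) volume ∧
    (∫ θ in (-π)..π, ((g θ : ℂ) *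
        Complex.exp (-Complex.I * (k : ℂ) * (π : ℂ) * (Real.sin θ : ℂ)))) =
      (1 / (2 * π) : ℂ) *
        ∫ u in Set.Ioo (-π) π, (f u : ℂ) * Complex.exp (-Complex.I * (k : ℂ) * (u : ℂ)) := by
  have hπ : (0 : ℝ) < π := Real.pi_pos
  set S : Set ℝ := Set.Ioo (-(π / 2)) (π / 2) with hSdef
  have hmeas : MeasurableSet S := measurableSet_Ioo
  set φ : ℝ → ℝ := fun s => π * Real.sin s with hφdef
  have hderiv : ∀ x ∈ S, HasDerivWithinAt φ (π * Real.cos x) S x := fun x _ =>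
    ((Real.hasDerivAt_sin x).const_mul π).hasDerivWithinAt
  have hmono : StrictMonoOn φ S := by
    intro a ha b hb hab
    have := Real.strictMonoOn_sin (Set.Ioo_subset_Icc_self ha) (Set.Ioo_subset_Icc_self hb) hab
    exact mul_lt_mul_of_pos_left this hπ
  have hinj : Set.InjOn φ S := hmono.injOn
  have himg : φ '' S = Set.Ioo (-π) π := by
    ext u
    constructor
    · rintro ⟨s, hs, rfl⟩
      have hmem1 : π / 2 ∈ Set.Icc (-(π / 2)) (π / 2) := ⟨by linarith, le_refl _⟩
      have hmem2 : -(π / 2) ∈ Set.Icc (-(π / 2)) (π / 2) := ⟨le_refl _, by linarith⟩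
      have h1 : Real.sin s < 1 := by
        have := Real.strictMonoOn_sin (Set.Ioo_subset_Icc_self hs) hmem1 hs.2
        simpa using this
      have h2 : -1 < Real.sin s := by
        have := Real.strictMonoOn_sin hmem2 (Set.Ioo_subset_Icc_self hs) hs.1
        simpa using this
      simp only [hφdef]
      constructor
      · nlinarith
      · nlinarith
    · intro hu
      refine ⟨Real.arcsin (u / π), ⟨?_, ?_⟩, ?_⟩
      · exact Real.neg_pi_div_two_lt_arcsin.mpr (by rw [lt_div_iff₀ hπ]; linarith [hu.1])
      · exact Real.arcsin_lt_pi_div_two.mpr ((div_lt_one hπ).mpr hu.2)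
      · have hb1 : -1 ≤ u / π := by rw [le_div_iff₀ hπ]; linarith [hu.1]
        have hb2 : u / π ≤ 1 := ((div_lt_one hπ).mpr hu.2).le
        show π * Real.sin (Real.arcsin (u / π)) = u
        rw [Real.sin_arcsin hb1 hb2]
        field_simp
  -- the nice integrand on S
  set G : ℝ → ℂ := fun s => (2 * π : ℝ) •
      (((g s + g (π - s) : ℝ) : ℂ) * Complex.exp (-Complex.I * (k : ℂ) * (π : ℂ) * (Real.sin s : ℂ)))
    with hGdef
  have hGcont : Continuous G := by
    refine Continuous.const_smul (g := fun s => (((g s + g (π - s) : ℝ) : ℂ) * Complex.exp (-Complex.I * (k : ℂ) * (π : ℂ) * (Real.sin s : ℂ)))) ?_ (2 * π : ℝ)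
    apply Continuous.mul
    · exact Complex.continuous_ofReal.comp (hg.add (hg.comp (continuous_const.sub continuous_id)))
    · exact Complex.continuous_exp.comp
        (continuous_const.mul (Complex.continuous_ofReal.comp Real.continuous_sin))
  -- pointwise identity on S
  have hpt : ∀ s ∈ S,
      |π * Real.cos s| • ((f (φ s) : ℂ) * Complex.exp (-Complex.I * (k : ℂ) * ((φ s : ℝ) : ℂ)))
        = G s := by
    intro s hs
    have hcos : 0 < Real.cos s := Real.cos_pos_of_mem_Ioo hs
    have hmem : φ s ∈ Set.Ioo (-π) π := himg ▸ Set.mem_image_of_mem φ hs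
    have harc : Real.arcsin (φ s / π) = s := by
      have : φ s / π = Real.sin s := by field_simp [hφdef]; rfl
      rw [this, Real.arcsin_sin (by linarith [hs.1]) (by linarith [hs.2])]
    have hsqrt : Real.sqrt (π ^ 2 - (φ s) ^ 2) = π * Real.cos s := by
      have h1 : π ^ 2 - (φ s) ^ 2 = (π * Real.cos s) ^ 2 := by
        have := Real.sin_sq_add_cos_sq s
        simp only [hφdef]
        nlinarith
      rw [h1, Real.sqrt_sq (by positivity)]
    have hfval : f (φ s) = 2 * π * (g s + g (π - s)) / (π * Real.cos s) := by
      rw [hf _ hmem, harc, hsqrt]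
    have habs : |π * Real.cos s| = π * Real.cos s := abs_of_pos (by positivity)
    rw [habs, hfval, hGdef]
    have hexp : (-Complex.I * (k : ℂ) * ((φ s : ℝ) : ℂ))
        = -Complex.I * (k : ℂ) * (π : ℂ) * (Real.sin s : ℂ) := by
      simp only [hφdef]; push_cast; ring
    rw [hexp]
    have hπne : (π : ℂ) ≠ 0 := by exact_mod_cast hπ.ne'
    have hcne : Complex.cos (s : ℂ) ≠ 0 := by
      rw [← Complex.ofReal_cos]; exact_mod_cast hcos.ne'
    simp only [Complex.real_smul]
    push_cast
    field_simp
  -- integrability of the smul function on S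
  have hGint : IntegrableOn G S := by
    exact (hGcont.integrableOn_Icc).mono_set Set.Ioo_subset_Icc_self
  have hsmulint : IntegrableOn (fun s =>
      |π * Real.cos s| • ((f (φ s) : ℂ) * Complex.exp (-Complex.I * (k : ℂ) * ((φ s : ℝ) : ℂ)))) S :=
    hGint.congr_fun (fun s hs => (hpt s hs).symm) hmeas
  have hHint : IntegrableOn
      (fun u : ℝ => (f u : ℂ) * Complex.exp (-Complex.I * (k : ℂ) * (u : ℂ)))
      (Set.Ioo (-π) π) volume := by
    rw [← himg]
    exact (integrableOn_image_iff_integrableOn_abs_deriv_smul hmeas hderiv hinj _).mpr hsmulint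
  refine ⟨hHint, ?_⟩
  -- change of variables on the u-integral
  have hchg : (∫ u in Set.Ioo (-π) π, (f u : ℂ) * Complex.exp (-Complex.I * (k : ℂ) * (u : ℂ)))
      = ∫ s in S, G s := by
    rw [← himg,
      integral_image_eq_integral_abs_deriv_smul hmeas hderiv hinj
        (fun u : ℝ => (f u : ℂ) * Complex.exp (-Complex.I * (k : ℂ) * (u : ℂ)))]
    exact setIntegral_congr_fun hmeas hpt
  -- now the θ-integral
  set F : ℝ → ℂ := fun θ => (g θ : ℂ) *
      Complex.exp (-Complex.I * (k : ℂ) * (π : ℂ) * (Real.sin θ : ℂ)) with hFdef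
  have hFcont : Continuous F := by
    apply Continuous.mul
    · exact Complex.continuous_ofReal.comp hg
    · exact Complex.continuous_exp.comp
        (continuous_const.mul (Complex.continuous_ofReal.comp Real.continuous_sin))
  have hFper : Function.Periodic F (2 * π) := by
    intro θ
    simp only [hFdef, hper θ, Real.sin_add_two_pi]
  have step1 : (∫ θ in (-π)..π, F θ) = ∫ θ in (-(π/2))..(3 * π / 2), F θ := by
    have := hFper.intervalIntegral_add_eq (-π) (-(π/2))
    rw [show -π + 2 * π = π by ring, show -(π/2) + 2 * π = 3 * π / 2 by ring] at this
    exact this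
  have step2 : (∫ θ in (-(π/2))..(3 * π / 2), F θ)
      = (∫ θ in (-(π/2))..(π/2), F θ) + ∫ θ in (π/2)..(3 * π / 2), F θ := by
    rw [intervalIntegral.integral_add_adjacent_intervals] <;>
      exact hFcont.intervalIntegrable _ _
  have step3 : (∫ θ in (π/2)..(3 * π / 2), F θ) = ∫ θ in (-(π/2))..(π/2), F (π - θ) := by
    rw [intervalIntegral.integral_comp_sub_left F π]
    norm_num
    rw [show π - π / 2 = π / 2 by ring, show π + π / 2 = 3 * π / 2 by ring]
  have hint1 : IntervalIntegrable F volume (-(π/2)) (π/2) := hFcont.intervalIntegrable _ _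
  have hint2 : IntervalIntegrable (fun θ => F (π - θ)) volume (-(π/2)) (π/2) :=
    (hFcont.comp (continuous_const.sub continuous_id)).intervalIntegrable _ _
  have step4 : (∫ θ in (-(π/2))..(π/2), F θ) + (∫ θ in (-(π/2))..(π/2), F (π - θ))
      = ∫ θ in (-(π/2))..(π/2), (F θ + F (π - θ)) :=
    (intervalIntegral.integral_add hint1 hint2).symm
  have step5 : (∫ θ in (-(π/2))..(π/2), (F θ + F (π - θ)))
      = ∫ s in S, (((g s + g (π - s) : ℝ) : ℂ) *
          Complex.exp (-Complex.I * (k : ℂ) * (π : ℂ) * (Real.sin s : ℂ))) := by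
    rw [intervalIntegral.integral_of_le (by linarith), ← integral_Ioc_eq_integral_Ioo]
    apply setIntegral_congr_fun measurableSet_Ioc
    intro s _
    simp only [hFdef, Real.sin_pi_sub]
    push_cast
    ring
  have hsmul : (∫ s in S, G s) = (2 * π : ℝ) •
      ∫ s in S, (((g s + g (π - s) : ℝ) : ℂ) *
        Complex.exp (-Complex.I * (k : ℂ) * (π : ℂ) * (Real.sin s : ℂ))) := by
    simp only [hGdef]
    rw [integral_smul]
  rw [hchg, hsmul, step1, step2, step3, step4, step5]
  rw [Complex.real_smul]
  push_cast
  have h2π : ((2 : ℂ) * π) ≠ 0 := by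
    simp only [ne_eq, mul_eq_zero, two_ne_zero, false_or, Complex.ofReal_ne_zero]
    exact hπ.ne'
  field_simp
end

section
/- Let M be a positive integer and define F₂ ∈ ℂ^{2M×M} by (F₂)_{k m} = (1/√(2M)) · exp(−2πi · k·m / (2M)) for k = 0, …, 2M−1 and m = 0, …, M−1 (the first M columns of the unitary 2M×2M DFT matrix). Then a matrix A ∈ ℂ^{M×M} satisfies A = F₂ᴴ diag(w) F₂ for some w ∈ ℂ^{2M} if and only if A is a Toeplitz matrix, i.e., A_{mn} = A_{pq} whenever m − n = p − q. -/
open Matrix Real BigOperators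

section Aux

open Complex

lemma orth_sum' (N : ℕ) (hN : 0 < N) (t : ℤ) :
    ∑ k : Fin N, Complex.exp (2 * Real.pi * I * t * k / N) =
      if (N : ℤ) ∣ t then (N : ℂ) else 0 := by
  have hNc : (N : ℂ) ≠ 0 := Nat.cast_ne_zero.2 hN.ne'
  have hterm : ∀ k : Fin N,
      Complex.exp (2 * Real.pi * I * t * k / N) =
        Complex.exp (2 * Real.pi * I * t / N) ^ (k : ℕ) := by
    intro k
    rw [← Complex.exp_nat_mul]
    ring_nf
  simp only [hterm]
  rw [Fin.sum_univ_eq_sum_range]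
  by_cases hdvd : (N : ℤ) ∣ t
  · obtain ⟨s, rfl⟩ := hdvd
    have h1 : Complex.exp (2 * Real.pi * I * (((N : ℤ) * s : ℤ) : ℂ) / N) = 1 := by
      have he : (2 * Real.pi * I * (((N : ℤ) * s : ℤ) : ℂ) / N) = (s : ℂ) * (2 * Real.pi * I) := by
        push_cast
        field_simp
      rw [he, Complex.exp_int_mul_two_pi_mul_I]
    rw [if_pos ⟨s, rfl⟩]
    push_cast at h1
    simp [h1]
  · rw [if_neg hdvd]
    have h2 : (2 * Real.pi * I : ℂ) ≠ 0 := by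
      simp [Real.pi_ne_zero, Complex.I_ne_zero]
    have hne : Complex.exp (2 * Real.pi * I * t / N) ≠ 1 := by
      intro h
      rw [Complex.exp_eq_one_iff] at h
      obtain ⟨n, hn⟩ := h
      apply hdvd
      refine ⟨n, ?_⟩
      have h3 : (2 * Real.pi * I) * ((t : ℂ) / N) = (2 * Real.pi * I) * (n : ℂ) := by
        linear_combination hn
      have h4 : (t : ℂ) / N = (n : ℂ) := mul_left_cancel₀ h2 h3
      have h5 : (t : ℂ) = (N : ℂ) * n := by
        rw [div_eq_iff hNc] at h4
        rw [h4]; ring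
      exact_mod_cast h5
    rw [geom_sum_eq hne]
    have hpow : Complex.exp (2 * Real.pi * I * t / N) ^ N = 1 := by
      rw [← Complex.exp_nat_mul]
      have he : (N : ℂ) * (2 * Real.pi * I * t / N) = (t : ℂ) * (2 * Real.pi * I) := by
        field_simp
      rw [he, Complex.exp_int_mul_two_pi_mul_I]
    rw [hpow]
    simp

lemma entry_formula' (M : ℕ) (hM : 0 < M)
    (F₂ : Matrix (Fin (2 * M)) (Fin M) ℂ)
    (hF₂ : ∀ (k : Fin (2 * M)) (m : Fin M),
      F₂ k m = (1 / Real.sqrt (2 * M) : ℝ) *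
        Complex.exp (-(2 * (π : ℂ) * Complex.I) * ((k : ℕ) : ℂ) * ((m : ℕ) : ℂ) / ((2 * M : ℕ) : ℂ)))
    (w : Fin (2 * M) → ℂ) (m n : Fin M) :
    (F₂ᴴ * diagonal w * F₂) m n =
      (1 / ((2 * M : ℕ) : ℂ)) * ∑ k : Fin (2 * M),
        w k * Complex.exp (2 * Real.pi * Complex.I * ((((m : ℕ) : ℤ) - ((n : ℕ) : ℤ) : ℤ) : ℂ) * k / ((2 * M : ℕ) : ℂ)) := by
  have hN0 : (0 : ℝ) ≤ (2 * M : ℕ) := by positivity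
  have hNc : ((2 * M : ℕ) : ℂ) ≠ 0 := by
    exact_mod_cast Nat.cast_ne_zero.2 (by omega : 2 * M ≠ 0)
  have key : ∀ k : Fin (2 * M),
      star (F₂ k m) * w k * F₂ k n =
        (1 / ((2 * M : ℕ) : ℂ)) *
          (w k * Complex.exp (2 * Real.pi * Complex.I * ((((m : ℕ) : ℤ) - ((n : ℕ) : ℤ) : ℤ) : ℂ) * k / ((2 * M : ℕ) : ℂ))) := by
    intro k
    rw [hF₂ k m, hF₂ k n]
    rw [star_mul']
    have hstar : star (Complex.exp (-(2 * (π : ℂ) * Complex.I) * ((k : ℕ) : ℂ) * ((m : ℕ) : ℂ) / ((2 * M : ℕ) : ℂ)))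
        = Complex.exp ((2 * (π : ℂ) * Complex.I) * ((k : ℕ) : ℂ) * ((m : ℕ) : ℂ) / ((2 * M : ℕ) : ℂ)) := by
      rw [Complex.star_def, ← Complex.exp_conj]
      congr 1
      simp only [map_div₀, _root_.map_mul, map_neg, Complex.conj_I, map_ofNat,
        Complex.conj_natCast, Complex.conj_ofReal]
      ring
    rw [hstar]
    have hr : (star ((1 / Real.sqrt (2 * M) : ℝ) : ℂ)) = ((1 / Real.sqrt (2 * M) : ℝ) : ℂ) := by
      simp [Complex.conj_ofReal]
    rw [hr]
    have hrr : ((1 / Real.sqrt (2 * M) : ℝ) : ℂ) * ((1 / Real.sqrt (2 * M) : ℝ) : ℂ) = 1 / ((2 * M : ℕ) : ℂ) := by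
      rw [← Complex.ofReal_mul]
      have : (1 / Real.sqrt (2 * M) : ℝ) * (1 / Real.sqrt (2 * M) : ℝ) = 1 / (2 * M : ℝ) := by
        rw [div_mul_div_comm, Real.mul_self_sqrt (by positivity)]
        norm_num
      rw [this]
      push_cast
      norm_num
    have hexp : Complex.exp ((2 * (π : ℂ) * Complex.I) * ((k : ℕ) : ℂ) * ((m : ℕ) : ℂ) / ((2 * M : ℕ) : ℂ)) *
        Complex.exp (-(2 * (π : ℂ) * Complex.I) * ((k : ℕ) : ℂ) * ((n : ℕ) : ℂ) / ((2 * M : ℕ) : ℂ)) =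
        Complex.exp (2 * Real.pi * Complex.I * ((((m : ℕ) : ℤ) - ((n : ℕ) : ℤ) : ℤ) : ℂ) * k / ((2 * M : ℕ) : ℂ)) := by
      rw [← Complex.exp_add]
      congr 1
      push_cast
      field_simp
      ring
    calc ((1 / Real.sqrt (2 * M) : ℝ) : ℂ) * Complex.exp ((2 * (π : ℂ) * Complex.I) * ((k : ℕ) : ℂ) * ((m : ℕ) : ℂ) / ((2 * M : ℕ) : ℂ)) * w k *
          (((1 / Real.sqrt (2 * M) : ℝ) : ℂ) * Complex.exp (-(2 * (π : ℂ) * Complex.I) * ((k : ℕ) : ℂ) * ((n : ℕ) : ℂ) / ((2 * M : ℕ) : ℂ)))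
        = (((1 / Real.sqrt (2 * M) : ℝ) : ℂ) * ((1 / Real.sqrt (2 * M) : ℝ) : ℂ)) *
          (w k * (Complex.exp ((2 * (π : ℂ) * Complex.I) * ((k : ℕ) : ℂ) * ((m : ℕ) : ℂ) / ((2 * M : ℕ) : ℂ)) *
            Complex.exp (-(2 * (π : ℂ) * Complex.I) * ((k : ℕ) : ℂ) * ((n : ℕ) : ℂ) / ((2 * M : ℕ) : ℂ)))) := by ring
      _ = _ := by rw [hrr, hexp]
  rw [Matrix.mul_apply, Finset.mul_sum]
  refine Finset.sum_congr rfl fun k _ => ?_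
  rw [Matrix.mul_diagonal, Matrix.conjTranspose_apply]
  exact key k

/-- extract diagonal values of a Toeplitz matrix -/
def toepC (M : ℕ) (hM : 0 < M) (A : Matrix (Fin M) (Fin M) ℂ) (d : ℤ) : ℂ :=
  if h : d.natAbs < M then
    (if 0 ≤ d then A ⟨d.natAbs, h⟩ ⟨0, hM⟩ else A ⟨0, hM⟩ ⟨d.natAbs, h⟩)
  else 0

end Aux

theorem toeplitz_characterization_partial_dft
    (M : ℕ) (hM : 0 < M)
    (F₂ : Matrix (Fin (2 * M)) (Fin M) ℂ)
    (hF₂ : ∀ (k : Fin (2 * M)) (m : Fin M),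
      F₂ k m = (1 / Real.sqrt (2 * M) : ℝ) *
        Complex.exp (-(2 * (π : ℂ) * Complex.I) * ((k : ℕ) : ℂ) * ((m : ℕ) : ℂ) / ((2 * M : ℕ) : ℂ)))
    (A : Matrix (Fin M) (Fin M) ℂ) :
    (∃ w : Fin (2 * M) → ℂ, A = F₂ᴴ * diagonal w * F₂) ↔
      (∀ m n p q : Fin M,
        ((m : ℕ) : ℤ) - ((n : ℕ) : ℤ) = ((p : ℕ) : ℤ) - ((q : ℕ) : ℤ) → A m n = A p q) := by
  have hN : 0 < 2 * M := by omega
  have hNc : ((2 * M : ℕ) : ℂ) ≠ 0 := Nat.cast_ne_zero.2 (by omega)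
  constructor
  · rintro ⟨w, rfl⟩ m n p q h
    rw [entry_formula' M hM F₂ hF₂ w m n, entry_formula' M hM F₂ hF₂ w p q, h]
  · intro hT
    -- diagonal values
    set c : ℤ → ℂ := toepC M hM A with hc_def
    have hc : ∀ m n : Fin M, A m n = c (((m : ℕ) : ℤ) - ((n : ℕ) : ℤ)) := by
      intro m n
      have hm := m.isLt
      have hn := n.isLt
      have hlt : (((m : ℕ) : ℤ) - ((n : ℕ) : ℤ)).natAbs < M := by omega
      rw [hc_def]
      unfold toepC
      rw [dif_pos hlt]
      by_cases h0 : (0 : ℤ) ≤ ((m : ℕ) : ℤ) - ((n : ℕ) : ℤ)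
      · rw [if_pos h0]
        exact hT m n ⟨_, hlt⟩ ⟨0, hM⟩ (by simp only [Fin.val_mk]; omega)
      · rw [if_neg h0]
        exact hT m n ⟨0, hM⟩ ⟨_, hlt⟩ (by simp only [Fin.val_mk]; omega)
    -- the weights
    refine ⟨fun k => ∑ j : Fin (2 * M),
      c (((j : ℕ) : ℤ) - ((M : ℤ) - 1)) *
        Complex.exp (2 * Real.pi * Complex.I *
          (((-(((j : ℕ) : ℤ) - ((M : ℤ) - 1)) : ℤ) : ℂ)) * k / ((2 * M : ℕ) : ℂ)), ?_⟩
    ext m n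
    rw [entry_formula' M hM F₂ hF₂ _ m n, hc m n]
    set d : ℤ := ((m : ℕ) : ℤ) - ((n : ℕ) : ℤ) with hd_def
    have hm := m.isLt
    have hn := n.isLt
    have hdlb : -(M : ℤ) < d := by omega
    have hdub : d < (M : ℤ) := by omega
    -- simplify each summand
    have hsummand : ∀ k : Fin (2 * M), ∀ j : Fin (2 * M),
        c (((j : ℕ) : ℤ) - ((M : ℤ) - 1)) *
          Complex.exp (2 * Real.pi * Complex.I *
            (((-(((j : ℕ) : ℤ) - ((M : ℤ) - 1)) : ℤ) : ℂ)) * k / ((2 * M : ℕ) : ℂ)) *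
          Complex.exp (2 * Real.pi * Complex.I * ((d : ℤ) : ℂ) * k / ((2 * M : ℕ) : ℂ)) =
        c (((j : ℕ) : ℤ) - ((M : ℤ) - 1)) *
          Complex.exp (2 * Real.pi * Complex.I *
            (((d - (((j : ℕ) : ℤ) - ((M : ℤ) - 1)) : ℤ) : ℂ)) * k / ((2 * M : ℕ) : ℂ)) := by
      intro k j
      rw [mul_assoc, ← Complex.exp_add]
      congr 2
      push_cast
      rw [← add_div]
      congr 1
      ring
    symm
    calc (1 / ((2 * M : ℕ) : ℂ)) * ∑ k : Fin (2 * M),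
          (∑ j : Fin (2 * M),
            c (((j : ℕ) : ℤ) - ((M : ℤ) - 1)) *
              Complex.exp (2 * Real.pi * Complex.I *
                (((-(((j : ℕ) : ℤ) - ((M : ℤ) - 1)) : ℤ) : ℂ)) * k / ((2 * M : ℕ) : ℂ))) *
            Complex.exp (2 * Real.pi * Complex.I * ((d : ℤ) : ℂ) * k / ((2 * M : ℕ) : ℂ))
        = (1 / ((2 * M : ℕ) : ℂ)) * ∑ j : Fin (2 * M), ∑ k : Fin (2 * M),
            c (((j : ℕ) : ℤ) - ((M : ℤ) - 1)) *
              Complex.exp (2 * Real.pi * Complex.I *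
                (((d - (((j : ℕ) : ℤ) - ((M : ℤ) - 1)) : ℤ) : ℂ)) * k / ((2 * M : ℕ) : ℂ)) := by
          congr 1
          simp only [Finset.sum_mul]
          rw [Finset.sum_comm]
          exact Finset.sum_congr rfl fun j _ => Finset.sum_congr rfl fun k _ => hsummand k j
      _ = (1 / ((2 * M : ℕ) : ℂ)) * ∑ j : Fin (2 * M),
            c (((j : ℕ) : ℤ) - ((M : ℤ) - 1)) *
              (if ((2 * M : ℕ) : ℤ) ∣ (d - (((j : ℕ) : ℤ) - ((M : ℤ) - 1))) then ((2 * M : ℕ) : ℂ) else 0) := by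
          congr 1
          refine Finset.sum_congr rfl fun j _ => ?_
          rw [← Finset.mul_sum, orth_sum' (2 * M) hN]
      _ = (1 / ((2 * M : ℕ) : ℂ)) * (c d * ((2 * M : ℕ) : ℂ)) := by
          congr 1
          have hj₀lt : (d + ((M : ℤ) - 1)).toNat < 2 * M := by omega
          refine (Finset.sum_eq_single (⟨(d + ((M : ℤ) - 1)).toNat, hj₀lt⟩ : Fin (2 * M)) ?_ ?_).trans ?_
          · intro j _ hne
            rw [if_neg, mul_zero]
            intro hdvd
            have hj := j.isLt
            have ht0 : d - (((j : ℕ) : ℤ) - ((M : ℤ) - 1)) = 0 := by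
              refine Int.eq_zero_of_dvd_of_natAbs_lt_natAbs hdvd ?_
              omega
            apply hne
            apply Fin.ext
            simp
            omega
          · intro habs
            exact absurd (Finset.mem_univ _) habs
          · rw [if_pos]
            · congr 2
              simp
              omega
            · have : d - ((((⟨(d + ((M : ℤ) - 1)).toNat, hj₀lt⟩ : Fin (2 * M)) : ℕ) : ℤ) - ((M : ℤ) - 1)) = 0 := by
                simp
                omega
              rw [this]
              exact dvd_zero _
      _ = c d := by
          have h2M : ((2 * M : ℕ) : ℂ) ≠ 0 := hNc
          push_cast at h2M ⊢
          field_simp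
          exact mul_div_cancel_left₀ _ (by exact_mod_cast hM.ne')
end
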